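/- Let D_n^{(1)},…,D_n^{(m)}, δ_n^{(0)},…,δ_n^{(m)} be positive integers such that q_n^{(ν)}/δ_n^{(ν)} ∈ ℤ and (D_n^{(μ_2)}/δ_n^{(ν)})·p_n^{(μ_1,ν)} ∈ ℤ for all 1 ≤ μ_1 ≤ μ_2 ≤ m and ν = 0,…,m. Suppose that for every choice of l distinct row indices μ = (μ_1,…,μ_l) with 1 ≤ μ_1 < … < μ_l ≤ m and l distinct column indices ν = (ν_1,…,ν_l) with 0 ≤ ν_1 < … < ν_l ≤ m, the quantity (D_n^{(m)}/δ_n^{(ν_1)})⋯(D_n^{(m−l+1)}/δ_n^{(ν_l)})·det [ε_n^{(μ_i,ν_j)}]_{i,j=1,…,l} tends to 0 as n → ∞, and that for every n the (m+1)×(m+1) matrix whose first row is [q_n^{(0)},…,q_n^{(m)}] and whose remaining rows are [p_n^{(μ,0)},…,p_n^{(μ,m)}] (μ=1,…,m) has non-zero determinant. Then the dimension over ℚ of ℚ + ℚγ_1 + ⋯ + ℚγ_m is at least 2 + m − l. -/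

import Mathlib

open Filter Matrix

private lemma aux_int_clear {N : ℕ} (v : Fin N → ℚ) :
    ∃ d : ℕ, 0 < d ∧ ∀ i, ∃ a : ℤ, (d : ℚ) * v i = a := by
  refine ⟨∏ i, (v i).den, Finset.prod_pos fun i _ => (v i).pos, fun i => ?_⟩
  obtain ⟨c, hc⟩ : (v i).den ∣ ∏ j, (v j).den := Finset.dvd_prod_of_mem _ (Finset.mem_univ i)
  refine ⟨(v i).num * c, ?_⟩
  have hden : v i * ((v i).den : ℚ) = (v i).num := by
    nth_rewrite 1 [← Rat.num_div_den (v i)]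
    exact div_mul_cancel₀ _ (by exact_mod_cast (v i).den_nz)
  rw [hc]
  push_cast
  calc ((v i).den : ℚ) * c * v i = v i * ((v i).den : ℚ) * c := by ring
  _ = ((v i).num : ℚ) * c := by rw [hden]

private lemma aux_pivot {l N : ℕ} {c : Fin l → Fin N} (hc : StrictAnti c) :
    ∀ j : ℕ, ∀ hj : j < l, (c ⟨j, hj⟩ : ℕ) + j < N := by
  intro j
  induction j with
  | zero => intro hj; simpa using (c ⟨0, hj⟩).isLt
  | succ j ih =>
    intro hj
    have h1 := ih (by omega)
    have h2 : c ⟨j + 1, hj⟩ < c ⟨j, by omega⟩ := hc (by simp [Fin.lt_def])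
    rw [Fin.lt_def] at h2
    omega

private lemma aux_tri {l N : ℕ} (z : Fin l → Fin N → ℚ) (c : Fin l → Fin N)
    (hc : StrictAnti c) (hnz : ∀ k, z k (c k) ≠ 0) (hhi : ∀ k j, c k < j → z k j = 0) :
    LinearIndependent ℚ z := by
  rw [Fintype.linearIndependent_iff]
  intro g hg
  have key : ∀ j : ℕ, ∀ hj : j < l, g ⟨j, hj⟩ = 0 := by
    intro j
    induction j using Nat.strong_induction_on with
    | _ j ih =>
      intro hj
      have hev := congrFun hg (c ⟨j, hj⟩)
      rw [Finset.sum_apply] at hev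
      simp only [Pi.smul_apply, smul_eq_mul, Pi.zero_apply] at hev
      rw [Finset.sum_eq_single (⟨j, hj⟩ : Fin l)] at hev
      · exact (mul_eq_zero.mp hev).resolve_right (hnz _)
      · intro b _ hb
        rcases lt_or_gt_of_ne hb with h | h
        · have hgb : g b = 0 := by
            have := ih b.1 (Fin.lt_def.mp h) b.isLt
            simpa using this
          rw [hgb, zero_mul]
        · rw [hhi b _ (hc h), mul_zero]
      · intro h; exact absurd (Finset.mem_univ _) h
  intro k
  have := key k.1 k.isLt
  simpa using this

private lemma aux_echelon {N l : ℕ} (W : Submodule ℚ (Fin N → ℚ))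
    (hW : l ≤ Module.finrank ℚ W) :
    ∃ (w : Fin l → (Fin N → ℚ)) (c : Fin l → Fin N),
      StrictAnti c ∧ (∀ k, w k ∈ W) ∧ (∀ k, w k (c k) ≠ 0) ∧
      (∀ k j, c k < j → w k j = 0) := by
  classical
  set P : Finset (Fin N) :=
    Finset.univ.filter (fun j => ∃ v ∈ W, v j ≠ 0 ∧ ∀ i, j < i → v i = 0) with hP
  have hPmem : ∀ j, j ∈ P → ∃ v, v ∈ W ∧ v j ≠ 0 ∧ ∀ i, j < i → v i = 0 := by
    intro j hj
    rw [hP, Finset.mem_filter] at hj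
    obtain ⟨-, v, hv1, hv2, hv3⟩ := hj
    exact ⟨v, hv1, hv2, hv3⟩
  choose! v hv1 hv2 hv3 using hPmem
  have hcard : l ≤ P.card := by
    by_contra hlt
    push_neg at hlt
    have key : ∀ k : ℕ, ∀ x, x ∈ W → (∀ i : Fin N, k ≤ (i : ℕ) → x i = 0) →
        x ∈ Submodule.span ℚ (↑(P.image v) : Set (Fin N → ℚ)) := by
      intro k
      induction k with
      | zero =>
        intro x _ h0
        have : x = 0 := funext fun i => h0 i (Nat.zero_le _)
        simp [this]
      | succ k ih =>
        intro x hx h0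
        by_cases hkN : k < N
        · set j : Fin N := ⟨k, hkN⟩ with hj
          have hjv : (j : ℕ) = k := rfl
          by_cases hxj : x j = 0
          · refine ih x hx fun i hi => ?_
            rcases eq_or_lt_of_le hi with h | h
            · rwa [show i = j from Fin.ext h.symm]
            · exact h0 i h
          · have hjP : j ∈ P := by
              rw [hP, Finset.mem_filter]
              exact ⟨Finset.mem_univ _, x, hx, hxj,
                fun i hi => h0 i (by rw [Fin.lt_def] at hi; omega)⟩
            have hyj := hv2 j hjP
            set x' := x - (x j / v j j) • v j with hx'
            have hx'W : x' ∈ W := Submodule.sub_mem _ hx (Submodule.smul_mem _ _ (hv1 j hjP))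
            have hx'0 : ∀ i : Fin N, k ≤ (i : ℕ) → x' i = 0 := by
              intro i hi
              rcases eq_or_lt_of_le hi with h | h
              · have hij : i = j := Fin.ext h.symm
                subst hij
                simp [hx', div_mul_cancel₀ _ hyj]
              · have h1 : x i = 0 := h0 i h
                have h2 : v j i = 0 := hv3 j hjP i (by rw [Fin.lt_def]; omega)
                simp [hx', h1, h2]
            have hspan := ih x' hx'W hx'0
            have hmem : v j ∈ Submodule.span ℚ (↑(P.image v) : Set (Fin N → ℚ)) := by
              apply Submodule.subset_span
              simp only [Finset.coe_image, Set.mem_image, Finset.mem_coe]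
              exact ⟨j, hjP, rfl⟩
            have hxeq : x = x' + (x j / v j j) • v j := by rw [hx']; abel
            rw [hxeq]
            exact Submodule.add_mem _ hspan (Submodule.smul_mem _ _ hmem)
        · exact ih x hx fun i hi => absurd i.isLt (by omega)
    have hWle : W ≤ Submodule.span ℚ (↑(P.image v) : Set (Fin N → ℚ)) :=
      fun x hx => key N x hx fun i hi => absurd i.isLt (by omega)
    have h1 : Module.finrank ℚ (Submodule.span ℚ (↑(P.image v) : Set (Fin N → ℚ)))
        ≤ (P.image v).card := by
      simpa using finrank_span_le_card (R := ℚ) (↑(P.image v) : Set (Fin N → ℚ))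
    have h2 : Module.finrank ℚ W ≤
        Module.finrank ℚ (Submodule.span ℚ (↑(P.image v) : Set (Fin N → ℚ))) :=
      Submodule.finrank_mono hWle
    have h3 : (P.image v).card ≤ P.card := Finset.card_image_le
    omega
  set e := P.orderEmbOfCardLe hcard with he
  refine ⟨fun k => v (e ⟨l - 1 - (k : ℕ), by omega⟩), fun k => e ⟨l - 1 - (k : ℕ), by omega⟩,
    ?_, ?_, ?_, ?_⟩
  · intro k k' hkk'
    apply e.strictMono
    rw [Fin.lt_def] at hkk' ⊢
    have := k.isLt
    have := k'.isLt
    simp only []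
    omega
  · intro k; exact hv1 _ (P.orderEmbOfCardLe_mem hcard _)
  · intro k; exact hv2 _ (P.orderEmbOfCardLe_mem hcard _)
  · intro k j hj; exact hv3 _ (P.orderEmbOfCardLe_mem hcard _) j hj

private lemma aux_cols {l N : ℕ} (hN : 0 < N) (M : Matrix (Fin l) (Fin N) ℚ)
    (hM : LinearIndependent ℚ (fun k => M k)) :
    ∃ ν : Fin l → Fin N, StrictMono ν ∧ (M.submatrix id ν).det ≠ 0 := by
  classical
  haveI : Nonempty (Fin N) := ⟨⟨0, hN⟩⟩
  have hrank : M.rank = l := by simpa using hM.rank_matrix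
  have hspan : Submodule.span ℚ (Set.range Mᵀ) = ⊤ := by
    apply Submodule.eq_top_of_finrank_eq
    rw [show Set.range Mᵀ = Set.range M.col from rfl, ← Matrix.rank_eq_finrank_span_cols, hrank]
    simp [Module.finrank_fin_fun]
  obtain ⟨b, hbsub, hbspan, hbind⟩ := exists_linearIndependent ℚ (Set.range Mᵀ)
  have hbfin : b.Finite := (Set.finite_range Mᵀ).subset hbsub
  haveI : Fintype b := hbfin.fintype
  have hcardb : b.toFinset.card = l := by
    rw [← finrank_span_set_eq_card hbind, hbspan, hspan, finrank_top, Module.finrank_fin_fun]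
  have hsel : ∀ x, x ∈ b.toFinset → ∃ ν : Fin N, Mᵀ ν = x ∧ ∀ ν' : Fin N, Mᵀ ν' = x → ν ≤ ν' := by
    intro x hx
    have hxb : x ∈ b := by simpa using hx
    obtain ⟨ν0, hν0⟩ := hbsub hxb
    have hne : (Finset.univ.filter (fun ν : Fin N => Mᵀ ν = x)).Nonempty :=
      ⟨ν0, by simp [hν0]⟩
    obtain ⟨νm, hνmem, hνmin⟩ := Finset.exists_min_image _ id hne
    rw [Finset.mem_filter] at hνmem
    exact ⟨νm, hνmem.2, fun ν' hν' => hνmin ν' (by simp [hν'])⟩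
  choose! sel hsel1 hsel2 using hsel
  have hinjon : Set.InjOn sel (b.toFinset : Set (Fin l → ℚ)) := by
    intro x hx y hy hxy
    rw [← hsel1 x (by simpa using hx), ← hsel1 y (by simpa using hy), hxy]
  set s : Finset (Fin N) := b.toFinset.image sel with hs
  have hscard : s.card = l := by rw [hs, Finset.card_image_of_injOn hinjon, hcardb]
  set ν : Fin l → Fin N := fun k => s.orderEmbOfFin hscard k with hν
  have hcolmem : ∀ k, Mᵀ (ν k) ∈ b ∧ sel (Mᵀ (ν k)) = ν k := by
    intro k
    have hks : ν k ∈ s := s.orderEmbOfFin_mem hscard k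
    rw [hs, Finset.mem_image] at hks
    obtain ⟨x, hx, hsx⟩ := hks
    have hMx : Mᵀ (ν k) = x := by rw [← hsx, hsel1 x hx]
    rw [hMx, hsx]
    exact ⟨by simpa using hx, rfl⟩
  refine ⟨ν, (s.orderEmbOfFin hscard).strictMono, ?_⟩
  have hψ : Function.Injective (fun k => (⟨Mᵀ (ν k), (hcolmem k).1⟩ : b)) := by
    intro k k' h
    have h1 : Mᵀ (ν k) = Mᵀ (ν k') := congrArg Subtype.val h
    have h2 : ν k = ν k' := by rw [← (hcolmem k).2, ← (hcolmem k').2, h1]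
    exact (s.orderEmbOfFin hscard).injective h2
  have hind : LinearIndependent ℚ (fun k => Mᵀ (ν k)) := hbind.comp _ hψ
  have hunit : IsUnit (M.submatrix id ν) := by
    rw [← Matrix.linearIndependent_cols_iff_isUnit]
    exact hind
  intro hdet0
  have := (Matrix.isUnit_iff_isUnit_det _).mp hunit
  rw [hdet0] at this
  exact not_isUnit_zero this

/-- **Remark 2.5** (refined second variation). As in Theorem 2.3, `ν` ranges over
`0, …, m`, the sequences `q n ν`, `p n μ ν` are rational, and
`D n μ`, `δ n ν` are positive integers with `q n ν / δ n ν ∈ ℤ` and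
`(D n μ₂ / δ n ν) * p n μ₁ ν ∈ ℤ` for `μ₁ ≤ μ₂`.  If
`(D n (m-1) / δ n ν₁) ⋯ (D n (m-l) / δ n ν_l) * det ε_n^{(μ,ν)} → 0` for all strictly
increasing multi-indices `μ`, `ν`, and the `(m+1) × (m+1)` matrix with first row
`q n` and remaining rows `p n μ` is non-singular for every `n`, then
`dim_ℚ (ℚ + ℚ γ 0 + ⋯ + ℚ γ (m-1)) ≥ 2 + m - l`. -/
theorem stmt_4 (m l : ℕ) (hl : 1 ≤ l) (hlm : l ≤ m)
    (γ : Fin m → ℝ) (q : ℕ → Fin (m + 1) → ℚ) (p : ℕ → Fin m → Fin (m + 1) → ℚ)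
    (ε : ℕ → Fin m → Fin (m + 1) → ℝ)
    (hε : ∀ n μ ν, ε n μ ν = (q n ν : ℝ) * γ μ - (p n μ ν : ℝ))
    (D : ℕ → Fin m → ℕ) (δ : ℕ → Fin (m + 1) → ℕ)
    (hD : ∀ n μ, 0 < D n μ) (hδ : ∀ n ν, 0 < δ n ν)
    (hq : ∀ n ν, ∃ a : ℤ, q n ν = (a : ℚ) * (δ n ν : ℚ))
    (hp : ∀ (n : ℕ) (μ₁ μ₂ : Fin m), μ₁ ≤ μ₂ → ∀ ν : Fin (m + 1),
      ∃ a : ℤ, (D n μ₂ : ℚ) * p n μ₁ ν = (a : ℚ) * (δ n ν : ℚ))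
    (hdet : ∀ (μs : Fin l → Fin m) (νs : Fin l → Fin (m + 1)),
      StrictMono μs → StrictMono νs →
      Tendsto (fun n =>
        (∏ i : Fin l,
          ((D n ⟨m - 1 - (i : ℕ), by have := i.isLt; omega⟩ : ℝ) / (δ n (νs i) : ℝ))) *
        (Matrix.of fun a b => ε n (μs a) (νs b)).det) atTop (nhds 0))
    (hnonsing : ∀ n : ℕ,
      (Matrix.of fun (i : Fin (m + 1)) (ν : Fin (m + 1)) =>
        Fin.cases (motive := fun _ => ℚ) (q n ν) (fun μ => p n μ ν) i).det ≠ 0) :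
    ((2 + m - l : ℕ) : Cardinal) ≤
      Module.rank ℚ ↥(Submodule.span ℚ (insert (1 : ℝ) (Set.range γ))) := by
  classical
  by_contra hcon
  haveI hfinV : FiniteDimensional ℚ
      ↥(Submodule.span ℚ (insert (1 : ℝ) (Set.range γ))) :=
    FiniteDimensional.span_of_finite ℚ ((Set.finite_range γ).insert 1)
  rw [← Module.finrank_eq_rank, Nat.cast_le, not_le] at hcon
  -- the relation space
  set g0 : Fin (m + 1) → ℝ := Fin.cons 1 γ with hg0
  set φ : (Fin (m + 1) → ℚ) →ₗ[ℚ] ℝ := Fintype.linearCombination ℚ g0 with hφ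
  have hrange : LinearMap.range φ ≤ Submodule.span ℚ (insert (1 : ℝ) (Set.range γ)) := by
    rintro x ⟨a, rfl⟩
    rw [hφ, Fintype.linearCombination_apply]
    refine Submodule.sum_mem _ fun i _ => Submodule.smul_mem _ _ (Submodule.subset_span ?_)
    induction i using Fin.cases with
    | zero => simp [hg0]
    | succ μ => simp only [hg0, Fin.cons_succ]; exact Set.mem_insert_of_mem _ ⟨μ, rfl⟩
  have hWrank : l ≤ Module.finrank ℚ (LinearMap.ker φ) := by
    have h1 := LinearMap.finrank_range_add_finrank_ker φ
    have h2 : Module.finrank ℚ (LinearMap.range φ) ≤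
        Module.finrank ℚ ↥(Submodule.span ℚ (insert (1 : ℝ) (Set.range γ))) :=
      Submodule.finrank_mono hrange
    have h3 : Module.finrank ℚ (Fin (m + 1) → ℚ) = m + 1 := Module.finrank_fin_fun ℚ
    omega
  obtain ⟨w, c, hcanti, hwW, hwpiv, hwhigh⟩ := aux_echelon (LinearMap.ker φ) hWrank
  choose d hd hdz using fun k => aux_int_clear (w k)
  set z : Fin l → Fin (m + 1) → ℚ := fun k => (d k : ℚ) • w k with hzdef
  have hzW : ∀ k, z k ∈ LinearMap.ker φ := fun k => Submodule.smul_mem _ _ (hwW k)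
  have hzapp : ∀ k i, z k i = (d k : ℚ) * w k i := fun k i => rfl
  have hzpiv : ∀ k, z k (c k) ≠ 0 := fun k => by
    rw [hzapp]
    exact mul_ne_zero (Nat.cast_ne_zero.mpr (hd k).ne') (hwpiv k)
  have hzhigh : ∀ k j, c k < j → z k j = 0 := fun k j hj => by
    rw [hzapp, hwhigh k j hj, mul_zero]
  have hzint : ∀ k i, ∃ a : ℤ, z k i = (a : ℚ) := fun k i => by
    obtain ⟨a, ha⟩ := hdz k i
    exact ⟨a, by rw [hzapp]; exact ha⟩
  have hzind : LinearIndependent ℚ z := aux_tri z c hcanti hzpiv hzhigh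
  have hrel : ∀ k, ∑ μ : Fin m, (z k μ.succ : ℝ) * γ μ = -((z k 0 : ℚ) : ℝ) := by
    intro k
    have h0 : φ (z k) = 0 := LinearMap.mem_ker.mp (hzW k)
    rw [hφ, Fintype.linearCombination_apply, Fin.sum_univ_succ] at h0
    simp only [hg0, Fin.cons_zero, Fin.cons_succ, Rat.smul_def, mul_one] at h0
    linarith [h0]
  -- pivot bounds
  have hcb : ∀ k : Fin l, (c k : ℕ) + (k : ℕ) ≤ m := by
    intro k
    have h := aux_pivot hcanti k.1 k.isLt
    rw [Fin.eta] at h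
    omega
  set km : Fin l → Fin m := fun k => ⟨m - 1 - (k : ℕ), by have := k.isLt; omega⟩ with hkm
  have hkmval : ∀ k, (km k : ℕ) = m - 1 - (k : ℕ) := fun k => rfl
  have hzsupp : ∀ (k : Fin l) (μ : Fin m), (km k : ℕ) < (μ : ℕ) → z k μ.succ = 0 := by
    intro k μ h
    apply hzhigh
    rw [Fin.lt_def, Fin.val_succ]
    have h1 := hcb k
    have h2 := k.isLt
    rw [hkmval] at h
    omega
  set u : ℕ → Fin l → Fin (m + 1) → ℚ :=
    fun n k ν => z k 0 * q n ν + ∑ μ : Fin m, z k μ.succ * p n μ ν with hudef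
  set T : ℕ → Fin l → Fin (m + 1) → ℚ :=
    fun n k ν => (D n (km k) : ℚ) * u n k ν / ((δ n ν : ℚ)) with hTdef
  have hδQ : ∀ n ν, ((δ n ν : ℚ)) ≠ 0 := fun n ν => Nat.cast_ne_zero.mpr (hδ n ν).ne'
  have hTint : ∀ n k ν, ∃ a : ℤ, T n k ν = (a : ℚ) := by
    intro n k ν
    have hterm : ∀ μ : Fin m, ∃ b : ℤ,
        (D n (km k) : ℚ) * (z k μ.succ * p n μ ν) = (b : ℚ) * (δ n ν : ℚ) := by
      intro μ
      by_cases hμ : (km k : ℕ) < (μ : ℕ)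
      · exact ⟨0, by rw [hzsupp k μ hμ]; simp⟩
      · obtain ⟨az, haz⟩ := hzint k μ.succ
        obtain ⟨ap, hap⟩ := hp n μ (km k) (by rw [Fin.le_def]; omega) ν
        refine ⟨az * ap, ?_⟩
        calc (D n (km k) : ℚ) * (z k μ.succ * p n μ ν)
            = z k μ.succ * ((D n (km k) : ℚ) * p n μ ν) := by ring
        _ = (az : ℚ) * ((ap : ℚ) * (δ n ν : ℚ)) := by rw [haz, hap]
        _ = ((az * ap : ℤ) : ℚ) * (δ n ν : ℚ) := by push_cast; ring
    choose b hb using hterm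
    obtain ⟨aq, haq⟩ := hq n ν
    obtain ⟨az0, haz0⟩ := hzint k 0
    refine ⟨az0 * (D n (km k) : ℤ) * aq + ∑ μ, b μ, ?_⟩
    rw [hTdef]
    simp only []
    rw [div_eq_iff (hδQ n ν), hudef]
    simp only []
    rw [mul_add, Finset.mul_sum]
    have h1 : (D n (km k) : ℚ) * (z k 0 * q n ν)
        = ((az0 * (D n (km k) : ℤ) * aq : ℤ) : ℚ) * (δ n ν : ℚ) := by
      rw [haz0, haq]; push_cast; ring
    rw [h1, Finset.sum_congr rfl fun μ _ => hb μ, ← Finset.sum_mul]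
    push_cast
    ring
  -- real form of u
  have hureal : ∀ n k (ν : Fin (m + 1)),
      ((u n k ν : ℚ) : ℝ) = ∑ μ : Fin m, (-((z k μ.succ : ℚ) : ℝ)) * ε n μ ν := by
    intro n k ν
    have hterm : ∀ μ : Fin m, (-((z k μ.succ : ℚ) : ℝ)) * ε n μ ν
        = ((z k μ.succ : ℚ) : ℝ) * (p n μ ν : ℝ)
          - (q n ν : ℝ) * (((z k μ.succ : ℚ) : ℝ) * γ μ) := by
      intro μ; rw [hε]; ring
    rw [Finset.sum_congr rfl fun μ _ => hterm μ, Finset.sum_sub_distrib, ← Finset.mul_sum,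
      hrel k, hudef]
    push_cast
    ring
  -- normalized hdet
  have hdetD : ∀ (μs : Fin l → Fin m) (νs : Fin l → Fin (m + 1)), StrictMono μs → StrictMono νs →
      Tendsto (fun n => (∏ i : Fin l, ((D n (km i) : ℝ) * ((δ n (νs i) : ℝ))⁻¹)) *
        (Matrix.of fun a b => ε n (μs a) (νs b)).det) atTop (nhds 0) := by
    intro μs νs h1 h2
    refine (hdet μs νs h1 h2).congr fun n => ?_
    simp [div_eq_mul_inv]
    exact Or.inl rfl
  -- per-f tendsto
  have hfseq : ∀ (f : Fin l → Fin m) (νs : Fin l → Fin (m + 1)), StrictMono νs →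
      Tendsto (fun n => (∏ i : Fin l, ((D n (km i) : ℝ) * ((δ n (νs i) : ℝ))⁻¹)) *
        (Matrix.of fun a b => ε n (f a) (νs b)).det) atTop (nhds 0) := by
    intro f νs hν
    by_cases hinj : Function.Injective f
    · set σ := Tuple.sort f with hσ
      have hg : StrictMono (f ∘ σ) :=
        (Tuple.monotone_sort f).strictMono_of_injective (hinj.comp σ.injective)
      have hkey : ∀ n, (Matrix.of fun a b => ε n (f a) (νs b)).det
          = ((Equiv.Perm.sign σ⁻¹ : ℤ) : ℝ) *
            (Matrix.of fun a b => ε n ((f ∘ σ) a) (νs b)).det := by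
        intro n
        have hsub : (Matrix.of fun a b => ε n (f a) (νs b)) =
            (Matrix.of fun a b => ε n ((f ∘ σ) a) (νs b)).submatrix (σ⁻¹ : Equiv.Perm (Fin l)) id := by
          ext a b
          simp [Matrix.submatrix_apply, Function.comp]
        rw [hsub, Matrix.det_permute]
      have htend := (hdetD (f ∘ σ) νs hg hν).const_mul ((Equiv.Perm.sign σ⁻¹ : ℤ) : ℝ)
      rw [mul_zero] at htend
      refine htend.congr fun n => ?_
      rw [hkey n]
      ring
    · obtain ⟨a, b, hab, hne⟩ := Function.not_injective_iff.mp hinj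
      have hzero : ∀ n, (Matrix.of fun a b => ε n (f a) (νs b)).det = 0 := fun n =>
        Matrix.det_zero_of_row_eq hne (by funext j; simp [hab])
      refine tendsto_const_nhds.congr fun n => ?_
      rw [hzero n, mul_zero]
  -- tendsto of the T determinants
  have hTtend : ∀ νs : Fin l → Fin (m + 1), StrictMono νs →
      Tendsto (fun n => (Matrix.of fun k j => ((T n k (νs j) : ℚ) : ℝ)).det) atTop (nhds 0) := by
    intro νs hν
    have hexpand : ∀ n, (Matrix.of fun k j => ((T n k (νs j) : ℚ) : ℝ)).det =
        ∑ f : Fin l → Fin m, (∏ k, (-((z k (f k).succ : ℚ) : ℝ))) *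
          ((∏ i : Fin l, ((D n (km i) : ℝ) * ((δ n (νs i) : ℝ))⁻¹)) *
            (Matrix.of fun a b => ε n (f a) (νs b)).det) := by
      intro n
      have hrows : (Matrix.of fun k j => ((T n k (νs j) : ℚ) : ℝ)) = fun k => ∑ μ : Fin m,
          (-((z k μ.succ : ℚ) : ℝ)) •
            (fun j => (D n (km k) : ℝ) * (((δ n (νs j) : ℝ))⁻¹ * ε n μ (νs j))) := by
        funext k
        funext j
        rw [Finset.sum_apply]
        simp only [Pi.smul_apply, smul_eq_mul, Matrix.of_apply]
        have hT : ((T n k (νs j) : ℚ) : ℝ)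
            = (D n (km k) : ℝ) * ((u n k (νs j) : ℚ) : ℝ) * ((δ n (νs j) : ℝ))⁻¹ := by
          rw [hTdef]; push_cast; ring
        rw [hT, hureal n k (νs j), Finset.mul_sum, Finset.sum_mul]
        exact Finset.sum_congr rfl fun μ _ => by ring
      rw [hrows]
      have hdetrw := (Matrix.detRowAlternating (R := ℝ) (n := Fin l)).toMultilinearMap.map_sum
        (g := fun k μ => (-((z k μ.succ : ℚ) : ℝ)) •
          (fun j => (D n (km k) : ℝ) * (((δ n (νs j) : ℝ))⁻¹ * ε n μ (νs j))))
      rw [show Matrix.det (fun k => ∑ μ : Fin m,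
          (-((z k μ.succ : ℚ) : ℝ)) •
            (fun j => (D n (km k) : ℝ) * (((δ n (νs j) : ℝ))⁻¹ * ε n μ (νs j))))
        = ∑ f : Fin l → Fin m, Matrix.det (fun k =>
            (-((z k (f k).succ : ℚ) : ℝ)) •
              (fun j => (D n (km k) : ℝ) * (((δ n (νs j) : ℝ))⁻¹ * ε n (f k) (νs j))))
        from hdetrw]
      refine Finset.sum_congr rfl fun f _ => ?_
      have h1 := (Matrix.detRowAlternating (R := ℝ) (n := Fin l)).toMultilinearMap.map_smul_univ
        (fun k => -((z k (f k).succ : ℚ) : ℝ))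
        (fun k => (fun j => (D n (km k) : ℝ) * (((δ n (νs j) : ℝ))⁻¹ * ε n (f k) (νs j))))
      rw [show Matrix.det (fun k =>
            (-((z k (f k).succ : ℚ) : ℝ)) •
              (fun j => (D n (km k) : ℝ) * (((δ n (νs j) : ℝ))⁻¹ * ε n (f k) (νs j))))
        = (∏ k, -((z k (f k).succ : ℚ) : ℝ)) • Matrix.det (fun k =>
            (fun j => (D n (km k) : ℝ) * (((δ n (νs j) : ℝ))⁻¹ * ε n (f k) (νs j))))
        from h1]
      rw [smul_eq_mul]
      congr 1
      have h2 : Matrix.det (fun k =>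
            (fun j => (D n (km k) : ℝ) * (((δ n (νs j) : ℝ))⁻¹ * ε n (f k) (νs j))))
          = Matrix.det (Matrix.of fun k j => (D n (km k) : ℝ) *
              ((Matrix.of fun a b => ((δ n (νs b) : ℝ))⁻¹ *
                ((Matrix.of fun a' b' => ε n (f a') (νs b')) a b)) k j)) := rfl
      rw [h2, Matrix.det_mul_column, Matrix.det_mul_row, Finset.prod_mul_distrib]
      ring
    have hsum := tendsto_finset_sum (Finset.univ : Finset (Fin l → Fin m))
      (fun f _ => ((hfseq f νs hν).const_mul (∏ k, (-((z k (f k).succ : ℚ) : ℝ)))))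
    simp only [mul_zero, Finset.sum_const_zero] at hsum
    exact hsum.congr fun n => (hexpand n).symm
  -- eventual vanishing of T minors
  have hone : ∀ νs : Fin l → Fin (m + 1), StrictMono νs →
      ∀ᶠ n in atTop, (Matrix.of fun k j => T n k (νs j)).det = 0 := by
    intro νs hν
    have hball := (hTtend νs hν).eventually (Metric.ball_mem_nhds (0 : ℝ) one_pos)
    filter_upwards [hball] with n hn
    choose A hA using fun k j => hTint n k (νs j)
    have hAdet : (Matrix.of fun k j => T n k (νs j)).det
        = (((Matrix.of A).det : ℤ) : ℚ) := by
      have hmap : (Matrix.of fun k j => T n k (νs j))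
          = (Int.castRingHom ℚ).mapMatrix (Matrix.of A) := by
        ext k j
        simp [hA k j]
      rw [hmap, ← RingHom.map_det]
      rfl
    have hcast : (Matrix.of fun k j => ((T n k (νs j) : ℚ) : ℝ)).det
        = (((Matrix.of fun k j => T n k (νs j)).det : ℚ) : ℝ) := by
      have hmap : (Matrix.of fun k j => ((T n k (νs j) : ℚ) : ℝ))
          = (Rat.castHom ℝ).mapMatrix (Matrix.of fun k j => T n k (νs j)) := by
        ext k j
        simp
      rw [hmap, ← RingHom.map_det]
      rfl
    rw [hcast, hAdet] at hn
    rw [hAdet]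
    rw [Real.dist_eq, sub_zero] at hn
    push_cast at hn
    have habs : |(Matrix.of A).det| < 1 := by exact_mod_cast hn
    have hz0 : (Matrix.of A).det = 0 := Int.abs_lt_one_iff.mp habs
    rw [hz0]
    simp
  have hev : ∀ᶠ n in atTop, ∀ νs : {f : Fin l → Fin (m + 1) // StrictMono f},
      (Matrix.of fun k j => T n k (νs.1 j)).det = 0 :=
    Filter.eventually_all.mpr fun νs => hone νs.1 νs.2
  obtain ⟨n, hzero⟩ := hev.exists
  -- rows of T are independent
  set En : Matrix (Fin (m + 1)) (Fin (m + 1)) ℚ :=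
    Matrix.of fun i ν => Fin.cases (motive := fun _ => ℚ) (q n ν) (fun μ => p n μ ν) i with hEn
  have hEdet : En.det ≠ 0 := hnonsing n
  have hTind : LinearIndependent ℚ (fun k => (Matrix.of fun k' ν => T n k' ν) k) := by
    rw [Fintype.linearIndependent_iff]
    intro gc hgc
    have hgν : ∀ ν : Fin (m + 1), ∑ k, gc k * T n k ν = 0 := by
      intro ν
      have := congrFun hgc ν
      rw [Finset.sum_apply] at this
      simpa using this
    have hu0 : ∀ ν : Fin (m + 1), ∑ k, gc k * ((D n (km k) : ℚ) * u n k ν) = 0 := by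
      intro ν
      have h1 := hgν ν
      have h2 : ∑ k, gc k * T n k ν = (∑ k, gc k * ((D n (km k) : ℚ) * u n k ν)) / (δ n ν : ℚ) := by
        rw [Finset.sum_div]
        refine Finset.sum_congr rfl fun k _ => ?_
        rw [hTdef]
        ring
      rw [h2, div_eq_zero_iff] at h1
      exact h1.resolve_right (hδQ n ν)
    set hvec : Fin (m + 1) → ℚ := ∑ k, (gc k * (D n (km k) : ℚ)) • z k with hhv
    have hvE : ∀ ν : Fin (m + 1), ∑ i, hvec i * En i ν = 0 := by
      intro ν
      have hswap : ∑ i, hvec i * En i ν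
          = ∑ k, (gc k * (D n (km k) : ℚ)) * (∑ i, z k i * En i ν) := by
        rw [hhv]
        simp only [Finset.sum_apply, Pi.smul_apply, smul_eq_mul, Finset.sum_mul]
        rw [Finset.sum_comm]
        refine Finset.sum_congr rfl fun k _ => ?_
        rw [Finset.mul_sum]
        exact Finset.sum_congr rfl fun i _ => by ring
      have hue : ∀ k, ∑ i, z k i * En i ν = u n k ν := by
        intro k
        rw [Fin.sum_univ_succ]
        simp only [hEn, Matrix.of_apply, Fin.cases_zero, Fin.cases_succ]
        rfl
      rw [hswap, Finset.sum_congr rfl fun k _ => by rw [hue k]]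
      exact Eq.trans (Finset.sum_congr rfl fun k _ => by ring) (hu0 ν)
    have hv0 : hvec = 0 := by
      have h1 : Matrix.vecMul hvec En = Matrix.vecMul 0 En := by
        funext ν
        rw [Matrix.zero_vecMul]
        show ∑ i, hvec i * En i ν = (0 : Fin (m + 1) → ℚ) ν
        rw [hvE ν]
        rfl
      have h2 := congrArg (fun v => Matrix.vecMul v En⁻¹) h1
      simpa [Matrix.vecMul_vecMul, Matrix.mul_nonsing_inv En (isUnit_iff_ne_zero.mpr hEdet)]
        using h2
    have hcoef := Fintype.linearIndependent_iff.mp hzind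
      (fun k => gc k * (D n (km k) : ℚ)) (by rw [← hhv]; exact hv0)
    intro k
    have hk := hcoef k
    have hDk : ((D n (km k) : ℚ)) ≠ 0 := Nat.cast_ne_zero.mpr (hD n (km k)).ne'
    exact (mul_eq_zero.mp hk).resolve_right hDk
  obtain ⟨νsf, hνmono, hdetne⟩ := aux_cols (Nat.succ_pos m) (Matrix.of fun k ν => T n k ν) hTind
  exact hdetne (hzero ⟨νsf, hνmono⟩)
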